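/- For every α in the probability simplex △^d, the rescaled Sinkhorn negentropy with cost C/ε converges as ε → +∞ to half the negative expected cost: lim_{ε→+∞} ε · Ω_{C/ε}(α) = −(1/2) Σ_{i,j=1}^d α_i α_j c_{ij}. -/

import Mathlib

/-
The product plan `α ⊗ α` has zero entropy, so `OT_{C/ε,2}(α,α) ≤ ⟨α ⊗ α, C⟩ / ε`.
Conversely, strong convexity of `x log x` on `[0, 1]` gives, entrywise for any plan `p`,
`p log (p/q) ≥ (p - q) + (p - q)² / 2` with `q = αᵢαⱼ`; completing the square in `p - q` then
bounds the regularized cost from below by `⟨α ⊗ α, C⟩ / ε - ‖C‖² / (4ε²)`. Multiplying by `-ε/2`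
squeezes `ε · Ω_{C/ε}(α)` between `-⟨α ⊗ α, C⟩/2` and `-⟨α ⊗ α, C⟩/2 + ‖C‖² / (8ε)`.
-/

open Finset Real Filter

noncomputable section

/-- The probability simplex in `ℝ^d`. -/
def simplexS (d : ℕ) : Set (Fin d → ℝ) := stdSimplex ℝ (Fin d)

/-- Transport plans between `α` and `β`: nonnegative matrices with prescribed marginals,
supported where `α i * β j > 0`. -/
def couplings {d : ℕ} (α β : Fin d → ℝ) : Set (Matrix (Fin d) (Fin d) ℝ) :=
  {p | (∀ i j, 0 ≤ p i j) ∧ (∀ i, ∑ j, p i j = α i) ∧ (∀ j, ∑ i, p i j = β j) ∧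
    ∀ i j, α i * β j = 0 → p i j = 0}

/-- The entropy-regularized transport cost of a plan `p` (with the convention `0 log 0 = 0`,
which holds automatically since `Real.log 0 = 0`). -/
def OTcost {d : ℕ} (C : Matrix (Fin d) (Fin d) ℝ) (ε : ℝ) (α β : Fin d → ℝ)
    (p : Matrix (Fin d) (Fin d) ℝ) : ℝ :=
  (∑ i, ∑ j, p i j * C i j) + ε * ∑ i, ∑ j, p i j * Real.log (p i j / (α i * β j))

/-- Entropy-regularized optimal transport cost `OT_{C,ε}(α,β)`. -/
def OT {d : ℕ} (C : Matrix (Fin d) (Fin d) ℝ) (ε : ℝ) (α β : Fin d → ℝ) : ℝ :=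
  sInf (OTcost C ε α β '' couplings α β)

/-- The Sinkhorn negentropy `Ω_C(α) = -(1/2) OT_{C,2}(α,α)`. -/
def Omega {d : ℕ} (C : Matrix (Fin d) (Fin d) ℝ) (α : Fin d → ℝ) : ℝ :=
  -(1 / 2) * OT C 2 α α

theorem ConvexOn.add_mul_sub_le_of_hasDerivAt {S : Set ℝ} {f : ℝ → ℝ} {f' x y : ℝ}
    (hf : ConvexOn ℝ S f) (hx : x ∈ S) (hy : y ∈ S) (hf' : HasDerivAt f f' x) :
    f x + f' * (y - x) ≤ f y := by
  rcases lt_trichotomy x y with hxy | rfl | hxy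
  · have := hf.le_slope_of_hasDerivAt hx hy hxy hf'
    rw [slope_def_field, le_div_iff₀ (sub_pos.mpr hxy)] at this
    linarith
  · simp
  · have := hf.slope_le_of_hasDerivAt hy hx hxy hf'
    rw [slope_def_field, div_le_iff₀ (sub_pos.mpr hxy)] at this
    linarith

theorem convexOn_mul_log_sub_sq_div_two :
    ConvexOn ℝ (Set.Icc 0 1) (fun x : ℝ => x * log x - x ^ 2 / 2) := by
  refine convexOn_of_hasDerivWithinAt2_nonneg (convex_Icc 0 1)
    (f' := fun x => log x + 1 - x) (f'' := fun x => x⁻¹ - 1)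
    ((Real.continuous_mul_log.sub (by fun_prop)).continuousOn) (fun x hx => ?_)
    (fun x hx => ?_) (fun x hx => ?_) <;> rw [interior_Icc] at hx
  · exact ((Real.hasDerivAt_mul_log hx.1.ne').sub
      (by simpa using (hasDerivAt_pow 2 x).div_const 2)).hasDerivWithinAt
  · exact (((Real.hasDerivAt_log hx.1.ne').add_const 1).sub (hasDerivAt_id x)).hasDerivWithinAt
  · simpa using one_le_inv₀ hx.1 |>.mpr hx.2.le

theorem sub_add_sq_div_two_le_mul_log_div {p q : ℝ} (hp : 0 ≤ p) (hp1 : p ≤ 1) (hq : 0 < q)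
    (hq1 : q ≤ 1) : (p - q) + (p - q) ^ 2 / 2 ≤ p * log (p / q) := by
  have hderiv : HasDerivAt (fun x : ℝ => x * log x - x ^ 2 / 2) (log q + 1 - q) q :=
    (Real.hasDerivAt_mul_log hq.ne').sub (by simpa using (hasDerivAt_pow 2 q).div_const 2)
  have tangent := convexOn_mul_log_sub_sq_div_two.add_mul_sub_le_of_hasDerivAt
    ⟨hq.le, hq1⟩ ⟨hp, hp1⟩ hderiv
  rcases hp.eq_or_lt with rfl | hp
  · simp only [zero_mul, log_zero, mul_zero, zero_sub] at tangent ⊢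
    nlinarith
  · rw [log_div hp.ne' hq.ne']
    nlinarith

theorem mul_sub_sq_div_add_mul_sub_le {c ε p q : ℝ} (hε : 0 < ε) (hp : 0 ≤ p) (hp1 : p ≤ 1)
    (hq : 0 ≤ q) (hq1 : q ≤ 1) (hpq : q = 0 → p = 0) :
    q * c - c ^ 2 / (2 * ε) + ε * (p - q) ≤ p * c + ε * (p * log (p / q)) := by
  rcases hq.eq_or_lt with rfl | hq
  · rw [hpq rfl]
    simp only [zero_mul, zero_div, log_zero, mul_zero, sub_zero, add_zero, zero_sub]
    have : 0 ≤ c ^ 2 / (2 * ε) := by positivity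
    linarith
  · have hkl := mul_le_mul_of_nonneg_left (sub_add_sq_div_two_le_mul_log_div hp hp1 hq hq1) hε.le
    have hsq : 0 ≤ (ε * (p - q) + c) ^ 2 / (2 * ε) := by positivity
    have hexp : (ε * (p - q) + c) ^ 2 / (2 * ε)
        = ε * (p - q) ^ 2 / 2 + (p - q) * c + c ^ 2 / (2 * ε) := by
      field_simp
      ring
    nlinarith

section Couplings

variable {d : ℕ} {α β : Fin d → ℝ}

theorem vecMulVec_mem_couplings (hα : α ∈ simplexS d) (hβ : β ∈ simplexS d) :
    Matrix.vecMulVec α β ∈ couplings α β := by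
  refine ⟨fun i j => mul_nonneg (hα.1 i) (hβ.1 j), fun i => ?_, fun j => ?_, fun i j h => h⟩
  · simp [Matrix.vecMulVec_apply, ← Finset.mul_sum, hβ.2]
  · simp [Matrix.vecMulVec_apply, ← Finset.sum_mul, hα.2]

theorem OTcost_vecMulVec (C : Matrix (Fin d) (Fin d) ℝ) (ε : ℝ) :
    OTcost C ε α β (Matrix.vecMulVec α β) = ∑ i, ∑ j, α i * β j * C i j := by
  simp [OTcost, Matrix.vecMulVec_apply]

theorem sum_sub_le_OTcost (C : Matrix (Fin d) (Fin d) ℝ) {ε : ℝ} (hε : 0 < ε)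
    (hα : α ∈ simplexS d) (hβ : β ∈ simplexS d) {p : Matrix (Fin d) (Fin d) ℝ}
    (hp : p ∈ couplings α β) :
    ∑ i, ∑ j, α i * β j * C i j - (∑ i, ∑ j, C i j ^ 2) / (2 * ε) ≤ OTcost C ε α β p := by
  obtain ⟨hp0, hrow, -, hsupp⟩ := hp
  have hp1 : ∀ i j, p i j ≤ 1 := fun i j =>
    calc p i j ≤ ∑ j', p i j' := Finset.single_le_sum (fun j' _ => hp0 i j') (Finset.mem_univ j)
      _ = α i := hrow i
      _ ≤ 1 := (mem_Icc_of_mem_stdSimplex hα i).2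
  have hmass : ∑ i, ∑ j, ε * (p i j - α i * β j) = 0 := by
    simp [← Finset.mul_sum, Finset.sum_sub_distrib, hrow, hβ.2]
  have hcell := fun i j => mul_sub_sq_div_add_mul_sub_le (c := C i j) hε (hp0 i j) (hp1 i j)
    (mul_nonneg (hα.1 i) (hβ.1 j))
    (mul_le_one₀ (mem_Icc_of_mem_stdSimplex hα i).2 (hβ.1 j) (mem_Icc_of_mem_stdSimplex hβ j).2)
    (hsupp i j)
  have hsum := Finset.sum_le_sum fun i (_ : i ∈ Finset.univ) =>
    Finset.sum_le_sum fun j (_ : j ∈ Finset.univ) => hcell i j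
  rw [OTcost, Finset.mul_sum]
  simp_rw [Finset.mul_sum]
  simpa only [Finset.sum_add_distrib, Finset.sum_sub_distrib, hmass, add_zero,
    ← Finset.sum_div] using hsum

theorem bddBelow_OTcost_image (C : Matrix (Fin d) (Fin d) ℝ) {ε : ℝ} (hε : 0 < ε)
    (hα : α ∈ simplexS d) (hβ : β ∈ simplexS d) : BddBelow (OTcost C ε α β '' couplings α β) :=
  ⟨_, Set.forall_mem_image.mpr fun _ hp => sum_sub_le_OTcost C hε hα hβ hp⟩

theorem OT_le_sum (C : Matrix (Fin d) (Fin d) ℝ) {ε : ℝ} (hε : 0 < ε) (hα : α ∈ simplexS d)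
    (hβ : β ∈ simplexS d) : OT C ε α β ≤ ∑ i, ∑ j, α i * β j * C i j :=
  csInf_le (bddBelow_OTcost_image C hε hα hβ)
    ⟨_, vecMulVec_mem_couplings hα hβ, OTcost_vecMulVec C ε⟩

theorem sum_sub_le_OT (C : Matrix (Fin d) (Fin d) ℝ) {ε : ℝ} (hε : 0 < ε) (hα : α ∈ simplexS d)
    (hβ : β ∈ simplexS d) :
    ∑ i, ∑ j, α i * β j * C i j - (∑ i, ∑ j, C i j ^ 2) / (2 * ε) ≤ OT C ε α β :=
  le_csInf ⟨_, Set.mem_image_of_mem _ (vecMulVec_mem_couplings hα hβ)⟩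
    (Set.forall_mem_image.mpr fun _ hp => sum_sub_le_OTcost C hε hα hβ hp)

theorem mul_Omega_div_mem_Icc (C : Matrix (Fin d) (Fin d) ℝ) {ε : ℝ} (hε : 0 < ε)
    (hα : α ∈ simplexS d) :
    ε * Omega (Matrix.of fun i j => C i j / ε) α ∈ Set.Icc
      (-(1 / 2) * ∑ i, ∑ j, α i * α j * C i j)
      (-(1 / 2) * ∑ i, ∑ j, α i * α j * C i j + (∑ i, ∑ j, C i j ^ 2) / (8 * ε)) := by
  have hcost : ∑ i, ∑ j, α i * α j * (C i j / ε) = (∑ i, ∑ j, α i * α j * C i j) / ε := by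
    simp [Finset.sum_div, mul_div_assoc]
  have hsq : ∑ i, ∑ j, (C i j / ε) ^ 2 = (∑ i, ∑ j, C i j ^ 2) / ε ^ 2 := by
    simp [Finset.sum_div, div_pow]
  have hupper := OT_le_sum (Matrix.of fun i j => C i j / ε) two_pos hα hα
  have hlower := sum_sub_le_OT (Matrix.of fun i j => C i j / ε) two_pos hα hα
  simp only [Matrix.of_apply, hcost, hsq] at hupper hlower
  rw [Omega]
  constructor
  · have := mul_le_mul_of_nonneg_left hupper hε.le
    rw [mul_div_cancel₀ _ hε.ne'] at this
    linarith
  · have := mul_le_mul_of_nonneg_left hlower hε.le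
    have hexp : ε * ((∑ i, ∑ j, α i * α j * C i j) / ε - (∑ i, ∑ j, C i j ^ 2) / ε ^ 2 / (2 * 2))
        = ∑ i, ∑ j, α i * α j * C i j - 2 * ((∑ i, ∑ j, C i j ^ 2) / (8 * ε)) := by
      field_simp
      ring
    linarith

end Couplings

theorem sinkhorn_negentropy_limit_kernel_norm (d : ℕ)
    (C : Matrix (Fin d) (Fin d) ℝ)
    (α : Fin d → ℝ) (hα : α ∈ simplexS d) :
    Filter.Tendsto (fun ε : ℝ => ε * Omega (Matrix.of fun i j => C i j / ε) α)
      Filter.atTop (nhds (-(1 / 2) * ∑ i, ∑ j, α i * α j * C i j)) := by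
  have hgap : Tendsto (fun ε : ℝ => (∑ i, ∑ j, C i j ^ 2) / (8 * ε)) atTop (nhds 0) :=
    tendsto_const_nhds.div_atTop (tendsto_id.const_mul_atTop (by norm_num))
  refine tendsto_of_tendsto_of_tendsto_of_le_of_le' tendsto_const_nhds
    (by simpa only [add_zero] using tendsto_const_nhds.add hgap) ?_ ?_ <;>
  filter_upwards [eventually_gt_atTop 0] with ε hε
  exacts [(mul_Omega_div_mem_Icc C hε hα).1, (mul_Omega_div_mem_Icc C hε hα).2]
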